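/- The classical mean energy per oscillator $\bar{E}(T) = \frac{k_B T}{2} + \sqrt{\frac{k_B T}{2\pi\beta m}}\, \frac{e^{-1/(2\beta m k_B T)}}{\mathrm{erfc}(1/\sqrt{2\beta m k_B T})} - \frac{1}{2\beta m}$ satisfies $\bar{E}(T) < k_B T$ for all $T > 0$; i.e., the GUP classical mean energy is strictly less than the equipartition value $k_B T$ of the ordinary harmonic oscillator. -/

import Mathlib

/-!
With `x = 1 / √(2βm k_B T)` the claim reduces to `e^{-x²} / (√π erfc x) < x + 1/(2x)`, that is,
to the Mills-ratio bound `∫_x^∞ e^{-t²} dt > x e^{-x²} / (2x² + 1)`.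
This follows by integrating over `(x, ∞)` the derivative of `g t = t e^{-t²} / (2t² + 1)`, which is
`2 e^{-t²} / (2t² + 1)² - e^{-t²}`: the first summand is positive, and `g` vanishes at infinity.
-/

noncomputable def erfc'' (x : ℝ) : ℝ :=
  2 / Real.sqrt Real.pi * ∫ t in Set.Ioi x, Real.exp (-t ^ 2)

open MeasureTheory Set Filter Topology Real

lemma integrableOn_exp_neg_sq (s : Set ℝ) :
    IntegrableOn (fun t : ℝ => exp (-t ^ 2)) s := by
  simpa using (integrable_exp_neg_mul_sq one_pos).integrableOn

lemma integrableOn_exp_neg_sq_div_sq (s : Set ℝ) :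
    IntegrableOn (fun t : ℝ => 2 * exp (-t ^ 2) / (2 * t ^ 2 + 1) ^ 2) s := by
  refine ((integrableOn_exp_neg_sq s).const_mul 2).mono
    ((by fun_prop : Continuous fun t : ℝ => 2 * exp (-t ^ 2)).div (by fun_prop)
      fun t => by positivity).aestronglyMeasurable (ae_of_all _ fun t => ?_)
  have hden : 1 ≤ (2 * t ^ 2 + 1) ^ 2 := one_le_pow₀ (by nlinarith [sq_nonneg t])
  rw [norm_of_nonneg (by positivity), norm_of_nonneg (by positivity)]
  exact div_le_self (by positivity) hden

lemma hasDerivAt_mul_exp_neg_sq_div (t : ℝ) :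
    HasDerivAt (fun u : ℝ => u * exp (-u ^ 2) / (2 * u ^ 2 + 1))
      (2 * exp (-t ^ 2) / (2 * t ^ 2 + 1) ^ 2 - exp (-t ^ 2)) t := by
  have hexp : HasDerivAt (fun u : ℝ => exp (-u ^ 2)) (exp (-t ^ 2) * -(2 * t)) t := by
    simpa using ((hasDerivAt_pow 2 t).neg).exp
  have hden : HasDerivAt (fun u : ℝ => 2 * u ^ 2 + 1) (2 * (2 * t)) t := by
    simpa using ((hasDerivAt_pow 2 t).const_mul 2).add_const 1
  refine (((hasDerivAt_id' t).fun_mul hexp).fun_div hden (by positivity)).congr_deriv ?_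
  field_simp
  ring

lemma tendsto_mul_exp_neg_sq_div_atTop :
    Tendsto (fun t : ℝ => t * exp (-t ^ 2) / (2 * t ^ 2 + 1)) atTop (𝓝 0) := by
  have hexp : Tendsto (fun t : ℝ => exp (-t ^ 2)) atTop (𝓝 0) :=
    tendsto_exp_atBot.comp (tendsto_neg_atBot_iff.mpr (tendsto_pow_atTop two_ne_zero))
  refine squeeze_zero' ?_ ?_ hexp <;> filter_upwards [eventually_ge_atTop 0] with t ht
  · positivity
  · rw [div_le_iff₀ (by positivity)]
    nlinarith [exp_pos (-t ^ 2), sq_nonneg (t - 1)]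

lemma mul_exp_neg_sq_div_lt_integral_Ioi (x : ℝ) :
    x * exp (-x ^ 2) / (2 * x ^ 2 + 1) < ∫ t in Ioi x, exp (-t ^ 2) := by
  have hFTC := integral_Ioi_of_hasDerivAt_of_tendsto
    (hasDerivAt_mul_exp_neg_sq_div x).continuousAt.continuousWithinAt
    (fun t _ => hasDerivAt_mul_exp_neg_sq_div t)
    ((integrableOn_exp_neg_sq_div_sq _).sub (integrableOn_exp_neg_sq _))
    tendsto_mul_exp_neg_sq_div_atTop
  rw [integral_sub (integrableOn_exp_neg_sq_div_sq _) (integrableOn_exp_neg_sq _)] at hFTC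
  have hpos : 0 < ∫ t in Ioi x, 2 * exp (-t ^ 2) / (2 * t ^ 2 + 1) ^ 2 := by
    rw [setIntegral_pos_iff_support_of_nonneg_ae (ae_of_all _ fun t => by positivity)
      (integrableOn_exp_neg_sq_div_sq _)]
    have hsupp : Function.support (fun t : ℝ => 2 * exp (-t ^ 2) / (2 * t ^ 2 + 1) ^ 2) =
        univ := eq_univ_of_forall fun t => (by positivity : (0 : ℝ) < _).ne'
    simp [hsupp]
  linarith

lemma exp_neg_sq_div_sqrt_pi_mul_erfc_lt {x : ℝ} (hx : 0 < x) :
    exp (-x ^ 2) / (sqrt π * erfc'' x) < x + 1 / (2 * x) := by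
  have hI := mul_exp_neg_sq_div_lt_integral_Ioi x
  have hπ : 0 < sqrt π := sqrt_pos.mpr pi_pos
  have hIpos : 0 < ∫ t in Ioi x, exp (-t ^ 2) := lt_trans (by positivity) hI
  rw [div_lt_iff₀ (by positivity)] at hI
  rw [erfc'', div_lt_iff₀ (by positivity)]
  field_simp
  nlinarith

theorem gup_classical_mean_energy_below_equipartition (β m kB : ℝ)
    (hβ : 0 < β) (hm : 0 < m) (hkB : 0 < kB) :
    ∀ T : ℝ, 0 < T →
      kB * T / 2 + Real.sqrt (kB * T / (2 * Real.pi * β * m)) *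
          (Real.exp (-(1 / (2 * β * m * kB * T))) /
            erfc'' (1 / Real.sqrt (2 * β * m * kB * T))) -
        1 / (2 * β * m) < kB * T := by
  intro T hT
  set x := 1 / sqrt (2 * β * m * kB * T)
  have hx : 0 < x := by positivity
  have hx2 : x ^ 2 = 1 / (2 * β * m * kB * T) := by
    rw [div_pow, sq_sqrt (by positivity), one_pow]
  have hsqrt : sqrt (kB * T / (2 * π * β * m)) = kB * T * x / sqrt π := by
    rw [← sqrt_sq (by positivity : 0 ≤ kB * T * x / sqrt π), div_pow, mul_pow, hx2,
      sq_sqrt pi_pos.le]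
    congr 1
    field_simp
  have hmills := exp_neg_sq_div_sqrt_pi_mul_erfc_lt hx
  rw [← hx2, hsqrt]
  calc kB * T / 2 + kB * T * x / sqrt π * (exp (-x ^ 2) / erfc'' x) - 1 / (2 * β * m)
      = kB * T / 2 + kB * T * x * (exp (-x ^ 2) / (sqrt π * erfc'' x)) - 1 / (2 * β * m) := by
        ring
    _ < kB * T / 2 + kB * T * x * (x + 1 / (2 * x)) - 1 / (2 * β * m) := by
        gcongr
    _ = kB * T := by
        rw [mul_add, mul_assoc (kB * T) x x, ← sq, hx2]
        field_simp
        ring
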